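/- arXiv:math/0407153 — 2 statements merged into one kernel-verified Lean document; each statement's English description precedes it below -/
import Mathlib

section
/- Let Ω ⊆ ℝ² be open and connected, and let f : Ω → ℝ³ be an immersion in conformal curvature coordinates with conformal factor ρ, unit normal ν and principal curvatures κ₁, κ₂, such that κ₁ + κ₂ is constant on Ω. Then the Weingarten relations ∂₁ν = −κ₁∂₁f and ∂₂ν = −κ₂∂₂f hold on Ω, and the unit normal satisfies the Jacobi equation: ∂₁∂₁ν + ∂₂∂₂ν = −ρ²(κ₁² + κ₂²)·ν on Ω. -/
open scoped RealInnerProductSpace ContDiff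

/-- First partial derivative (in the first coordinate direction of `ℝ × ℝ`). -/
noncomputable def pd1 {E : Type*} [NormedAddCommGroup E] [NormedSpace ℝ E]
    (f : ℝ × ℝ → E) : ℝ × ℝ → E := fun p => fderiv ℝ f p (1, 0)

/-- Second partial derivative (in the second coordinate direction of `ℝ × ℝ`). -/
noncomputable def pd2 {E : Type*} [NormedAddCommGroup E] [NormedSpace ℝ E]
    (f : ℝ × ℝ → E) : ℝ × ℝ → E := fun p => fderiv ℝ f p (0, 1)

/-- `f : Ω → ℝ³` is an immersion in conformal curvature coordinates, with conformal
factor `ρ`, unit normal `ν` and principal curvatures `κ₁, κ₂`. -/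
structure IsCCC (Ω : Set (ℝ × ℝ)) (f ν : ℝ × ℝ → EuclideanSpace ℝ (Fin 3))
    (ρ κ₁ κ₂ : ℝ × ℝ → ℝ) : Prop where
  smooth_f : ContDiffOn ℝ ∞ f Ω
  smooth_ρ : ContDiffOn ℝ ∞ ρ Ω
  smooth_ν : ContDiffOn ℝ ∞ ν Ω
  smooth_κ₁ : ContDiffOn ℝ ∞ κ₁ Ω
  smooth_κ₂ : ContDiffOn ℝ ∞ κ₂ Ω
  ρ_pos : ∀ p ∈ Ω, 0 < ρ p
  g11 : ∀ p ∈ Ω, ⟪pd1 f p, pd1 f p⟫ = ρ p ^ 2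
  g22 : ∀ p ∈ Ω, ⟪pd2 f p, pd2 f p⟫ = ρ p ^ 2
  g12 : ∀ p ∈ Ω, ⟪pd1 f p, pd2 f p⟫ = 0
  nu_unit : ∀ p ∈ Ω, ⟪ν p, ν p⟫ = 1
  nu_f1 : ∀ p ∈ Ω, ⟪ν p, pd1 f p⟫ = 0
  nu_f2 : ∀ p ∈ Ω, ⟪ν p, pd2 f p⟫ = 0
  h12 : ∀ p ∈ Ω, ⟪ν p, pd1 (pd2 f) p⟫ = 0
  h11 : ∀ p ∈ Ω, ⟪ν p, pd1 (pd1 f) p⟫ = ρ p ^ 2 * κ₁ p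
  h22 : ∀ p ∈ Ω, ⟪ν p, pd2 (pd2 f) p⟫ = ρ p ^ 2 * κ₂ p

/-!
Differentiating the relations `⟪ν, ν⟫ = 1`, `⟪ν, ∂ⱼf⟫ = 0`, `⟪ν, ∂₁∂₂f⟫ = 0` shows that `∂ᵢν`
has no normal component and only the component `-κᵢρ²` along `∂ᵢf`: these are the Weingarten
relations. Differentiating them once more, the symmetry `∂₁∂₂ν = ∂₂∂₁ν` gives the Codazzi
equations `ρ ∂₁κ₂ = (κ₁ - κ₂) ∂₁ρ` and `ρ ∂₂κ₁ = (κ₂ - κ₁) ∂₂ρ`, and with them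
`∂₁∂₁ν + ∂₂∂₂ν = -ρ²(κ₁² + κ₂²) ν - (∂₁H ∂₁f + ∂₂H ∂₂f)` for `H = κ₁ + κ₂`, whose tangential
part vanishes when `H` is constant. All vector identities are checked against the orthogonal
frame `∂₁f, ∂₂f, ν`.
-/

open Set

section DirectionalDerivatives

variable {V E F : Type*} [NormedAddCommGroup V] [NormedSpace ℝ V]
  [NormedAddCommGroup E] [NormedSpace ℝ E] [NormedAddCommGroup F] [InnerProductSpace ℝ F]
  {Ω : Set V} {p : V}

theorem ContDiffOn.differentiableAt_of_isOpen {n : WithTop ℕ∞} {g : V → E}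
    (hg : ContDiffOn ℝ n g Ω) (hn : n ≠ 0) (hΩ : IsOpen Ω) (hp : p ∈ Ω) :
    DifferentiableAt ℝ g p :=
  (hg.differentiableOn hn).differentiableAt (hΩ.mem_nhds hp)

theorem ContDiffOn.differentiableAt_fderiv_of_isOpen {n : WithTop ℕ∞} {g : V → E}
    (hg : ContDiffOn ℝ n g Ω) (hn : 2 ≤ n) (hΩ : IsOpen Ω) (hp : p ∈ Ω) :
    DifferentiableAt ℝ (fderiv ℝ g) p :=
  (hg.fderiv_of_isOpen (m := 1) hΩ (by simpa [one_add_one_eq_two] using hn))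
    |>.differentiableAt_of_isOpen one_ne_zero hΩ hp

theorem fderiv_eq_of_eqOn {g₁ g₂ : V → E} (hΩ : IsOpen Ω) (hp : p ∈ Ω) (h : EqOn g₁ g₂ Ω) :
    fderiv ℝ g₁ p = fderiv ℝ g₂ p :=
  (h.eventuallyEq_of_mem (hΩ.mem_nhds hp)).fderiv_eq

theorem fderiv_eq_zero_of_eqOn_const {g : V → E} {c : E} (hΩ : IsOpen Ω) (hp : p ∈ Ω)
    (h : EqOn g (fun _ => c) Ω) : fderiv ℝ g p = 0 := by
  rw [fderiv_eq_of_eqOn hΩ hp h, fderiv_const_apply]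

theorem inner_fderiv_add_inner_fderiv_of_eqOn {u v : V → F} {φ : V → ℝ} (hΩ : IsOpen Ω)
    (hp : p ∈ Ω) (hu : DifferentiableAt ℝ u p) (hv : DifferentiableAt ℝ v p)
    (h : EqOn (fun q => ⟪u q, v q⟫) φ Ω) (d : V) :
    ⟪fderiv ℝ u p d, v p⟫ + ⟪u p, fderiv ℝ v p d⟫ = fderiv ℝ φ p d := by
  rw [← fderiv_eq_of_eqOn hΩ hp h, fderiv_inner_apply ℝ hu hv, add_comm]

theorem inner_fderiv_eq_neg_of_inner_eqOn_const {u v : V → F} {c : ℝ} (hΩ : IsOpen Ω)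
    (hp : p ∈ Ω) (hu : DifferentiableAt ℝ u p) (hv : DifferentiableAt ℝ v p)
    (h : EqOn (fun q => ⟪u q, v q⟫) (fun _ => c) Ω) (d : V) :
    ⟪fderiv ℝ u p d, v p⟫ = -⟪u p, fderiv ℝ v p d⟫ := by
  have := inner_fderiv_add_inner_fderiv_of_eqOn hΩ hp hu hv h d
  rw [fderiv_const_apply, zero_apply] at this
  linarith

theorem inner_fderiv_of_inner_self_eqOn_sq {u : V → F} {r : V → ℝ} (hΩ : IsOpen Ω)
    (hp : p ∈ Ω) (hu : DifferentiableAt ℝ u p) (hr : DifferentiableAt ℝ r p)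
    (h : EqOn (fun q => ⟪u q, u q⟫) (fun q => r q ^ 2) Ω) (d : V) :
    ⟪u p, fderiv ℝ u p d⟫ = r p * fderiv ℝ r p d := by
  have := inner_fderiv_add_inner_fderiv_of_eqOn hΩ hp hu hu h d
  rw [fderiv_fun_pow 2 hr, real_inner_comm] at this
  simp only [smul_apply, smul_eq_mul, nsmul_eq_mul] at this
  norm_num at this
  linarith

theorem fderiv_apply_of_eqOn_neg_smul {g w : V → E} {a : V → ℝ} (hΩ : IsOpen Ω) (hp : p ∈ Ω)
    (ha : DifferentiableAt ℝ a p) (hw : DifferentiableAt ℝ w p)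
    (h : EqOn g (fun q => -(a q • w q)) Ω) (d : V) :
    fderiv ℝ g p d = -(fderiv ℝ a p d • w p + a p • fderiv ℝ w p d) := by
  rw [fderiv_eq_of_eqOn hΩ hp h, fderiv_fun_neg, fderiv_fun_smul ha hw]
  simp only [neg_apply, add_apply, smul_apply, ContinuousLinearMap.smulRight_apply]
  rw [add_comm]

theorem fderiv_fderiv_apply_comm {n : WithTop ℕ∞} {g : V → E} (hg : ContDiffOn ℝ n g Ω)
    (hn : 2 ≤ n) (hΩ : IsOpen Ω) (hp : p ∈ Ω) (v w : V) :
    fderiv ℝ (fun q => fderiv ℝ g q v) p w = fderiv ℝ (fun q => fderiv ℝ g q w) p v := by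
  have hsymm : IsSymmSndFDerivAt ℝ g p :=
    (hg.contDiffAt (hΩ.mem_nhds hp)).isSymmSndFDerivAt (by simpa using hn)
  simp only [fderiv_clm_apply (hg.differentiableAt_fderiv_of_isOpen hn hΩ hp)
    (differentiableAt_const _), fderiv_fun_const, add_apply, ContinuousLinearMap.flip_apply]
  simp [hsymm.eq v w]

end DirectionalDerivatives

theorem pd1_pd2_comm {E : Type*} [NormedAddCommGroup E] [NormedSpace ℝ E] {Ω : Set (ℝ × ℝ)}
    {p : ℝ × ℝ} {n : WithTop ℕ∞} {g : ℝ × ℝ → E} (hg : ContDiffOn ℝ n g Ω) (hn : 2 ≤ n)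
    (hΩ : IsOpen Ω) (hp : p ∈ Ω) : pd1 (pd2 g) p = pd2 (pd1 g) p :=
  fderiv_fderiv_apply_comm hg hn hΩ hp _ _

theorem ext_inner_of_pairwise_inner_eq_zero {𝕜 E ι : Type*} [RCLike 𝕜] [NormedAddCommGroup E]
    [InnerProductSpace 𝕜 E] [FiniteDimensional 𝕜 E] [Fintype ι] {v : ι → E}
    (hcard : Fintype.card ι = Module.finrank 𝕜 E) (hv : ∀ i, v i ≠ 0)
    (ho : Pairwise fun i j => inner 𝕜 (v i) (v j) = 0) {x y : E}
    (h : ∀ i, inner 𝕜 (v i) x = inner 𝕜 (v i) y) : x = y :=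
  InnerProductSpace.ext_inner_left_basis
    (basisOfLinearIndependentOfCardEqFinrank' v
      (linearIndependent_of_ne_zero_of_inner_eq_zero hv ho) hcard)
    (by simpa using h)

namespace IsCCC

variable {Ω : Set (ℝ × ℝ)} {f ν : ℝ × ℝ → EuclideanSpace ℝ (Fin 3)} {ρ κ₁ κ₂ : ℝ × ℝ → ℝ}
  {p : ℝ × ℝ}

theorem ext_frame (h : IsCCC Ω f ν ρ κ₁ κ₂) (hp : p ∈ Ω) {x y : EuclideanSpace ℝ (Fin 3)}
    (h₁ : ⟪pd1 f p, x⟫ = ⟪pd1 f p, y⟫) (h₂ : ⟪pd2 f p, x⟫ = ⟪pd2 f p, y⟫)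
    (hν : ⟪ν p, x⟫ = ⟪ν p, y⟫) : x = y := by
  have hρ : ρ p ^ 2 ≠ 0 := pow_ne_zero 2 (h.ρ_pos p hp).ne'
  refine ext_inner_of_pairwise_inner_eq_zero (𝕜 := ℝ) (v := ![pd1 f p, pd2 f p, ν p])
    (by simp) ?_ ?_ ?_
  · intro i
    fin_cases i <;> refine (inner_self_ne_zero (𝕜 := ℝ)).1 ?_
    exacts [(h.g11 p hp).trans_ne hρ, (h.g22 p hp).trans_ne hρ,
      (h.nu_unit p hp).trans_ne one_ne_zero]
  · intro i j hij
    fin_cases i <;> fin_cases j <;>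
      simp_all [h.g12 p hp, h.nu_f1 p hp, h.nu_f2 p hp, real_inner_comm]
  · intro i
    fin_cases i <;> assumption

theorem differentiableAt_pd1 (h : IsCCC Ω f ν ρ κ₁ κ₂) (hΩ : IsOpen Ω) (hp : p ∈ Ω) :
    DifferentiableAt ℝ (pd1 f) p :=
  (h.smooth_f.differentiableAt_fderiv_of_isOpen (by norm_cast) hΩ hp).clm_apply
    (differentiableAt_const _)

theorem differentiableAt_pd2 (h : IsCCC Ω f ν ρ κ₁ κ₂) (hΩ : IsOpen Ω) (hp : p ∈ Ω) :
    DifferentiableAt ℝ (pd2 f) p :=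
  (h.smooth_f.differentiableAt_fderiv_of_isOpen (by norm_cast) hΩ hp).clm_apply
    (differentiableAt_const _)

theorem inner_pd1_fderiv_pd1 (h : IsCCC Ω f ν ρ κ₁ κ₂) (hΩ : IsOpen Ω) (hp : p ∈ Ω)
    (d : ℝ × ℝ) : ⟪pd1 f p, fderiv ℝ (pd1 f) p d⟫ = ρ p * fderiv ℝ ρ p d :=
  inner_fderiv_of_inner_self_eqOn_sq hΩ hp (h.differentiableAt_pd1 hΩ hp)
    (h.smooth_ρ.differentiableAt_of_isOpen (by simp) hΩ hp) h.g11 d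

theorem inner_pd2_fderiv_pd2 (h : IsCCC Ω f ν ρ κ₁ κ₂) (hΩ : IsOpen Ω) (hp : p ∈ Ω)
    (d : ℝ × ℝ) : ⟪pd2 f p, fderiv ℝ (pd2 f) p d⟫ = ρ p * fderiv ℝ ρ p d :=
  inner_fderiv_of_inner_self_eqOn_sq hΩ hp (h.differentiableAt_pd2 hΩ hp)
    (h.smooth_ρ.differentiableAt_of_isOpen (by simp) hΩ hp) h.g22 d

theorem inner_pd1_pd2_pd2 (h : IsCCC Ω f ν ρ κ₁ κ₂) (hΩ : IsOpen Ω) (hp : p ∈ Ω) :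
    ⟪pd1 f p, pd2 (pd2 f) p⟫ = -(ρ p * pd1 ρ p) := by
  have hΓ : ⟪pd2 f p, pd1 (pd2 f) p⟫ = ρ p * pd1 ρ p := h.inner_pd2_fderiv_pd2 hΩ hp _
  have h₁₂ : ⟪pd2 (pd1 f) p, pd2 f p⟫ = -⟪pd1 f p, pd2 (pd2 f) p⟫ :=
    inner_fderiv_eq_neg_of_inner_eqOn_const hΩ hp (h.differentiableAt_pd1 hΩ hp)
      (h.differentiableAt_pd2 hΩ hp) h.g12 _
  rw [← pd1_pd2_comm h.smooth_f (by norm_cast) hΩ hp, real_inner_comm] at h₁₂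
  linarith

theorem inner_pd2_pd1_pd1 (h : IsCCC Ω f ν ρ κ₁ κ₂) (hΩ : IsOpen Ω) (hp : p ∈ Ω) :
    ⟪pd2 f p, pd1 (pd1 f) p⟫ = -(ρ p * pd2 ρ p) := by
  have hΓ : ⟪pd1 f p, pd2 (pd1 f) p⟫ = ρ p * pd2 ρ p := h.inner_pd1_fderiv_pd1 hΩ hp _
  have h₁₂ : ⟪pd1 (pd1 f) p, pd2 f p⟫ = -⟪pd1 f p, pd1 (pd2 f) p⟫ :=
    inner_fderiv_eq_neg_of_inner_eqOn_const hΩ hp (h.differentiableAt_pd1 hΩ hp)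
      (h.differentiableAt_pd2 hΩ hp) h.g12 _
  rw [pd1_pd2_comm h.smooth_f (by norm_cast) hΩ hp] at h₁₂
  rw [real_inner_comm]
  linarith

theorem pd1_normal (h : IsCCC Ω f ν ρ κ₁ κ₂) (hΩ : IsOpen Ω) (hp : p ∈ Ω) :
    pd1 ν p = -(κ₁ p • pd1 f p) := by
  have dν := h.smooth_ν.differentiableAt_of_isOpen (by simp) hΩ hp
  have hνf₁ : ⟪pd1 ν p, pd1 f p⟫ = -⟪ν p, pd1 (pd1 f) p⟫ :=
    inner_fderiv_eq_neg_of_inner_eqOn_const hΩ hp dν (h.differentiableAt_pd1 hΩ hp) h.nu_f1 _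
  have hνf₂ : ⟪pd1 ν p, pd2 f p⟫ = -⟪ν p, pd1 (pd2 f) p⟫ :=
    inner_fderiv_eq_neg_of_inner_eqOn_const hΩ hp dν (h.differentiableAt_pd2 hΩ hp) h.nu_f2 _
  have hνν : ⟪pd1 ν p, ν p⟫ = -⟪ν p, pd1 ν p⟫ :=
    inner_fderiv_eq_neg_of_inner_eqOn_const hΩ hp dν dν h.nu_unit _
  apply h.ext_frame hp <;> simp only [inner_neg_right, real_inner_smul_right]
  · rw [real_inner_comm, hνf₁, h.h11 p hp, h.g11 p hp]; ring
  · rw [real_inner_comm, hνf₂, h.h12 p hp, real_inner_comm, h.g12 p hp]; ring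
  · rw [h.nu_f1 p hp]; linarith [real_inner_comm (ν p) (pd1 ν p)]

theorem pd2_normal (h : IsCCC Ω f ν ρ κ₁ κ₂) (hΩ : IsOpen Ω) (hp : p ∈ Ω) :
    pd2 ν p = -(κ₂ p • pd2 f p) := by
  have dν := h.smooth_ν.differentiableAt_of_isOpen (by simp) hΩ hp
  have hνf₁ : ⟪pd2 ν p, pd1 f p⟫ = -⟪ν p, pd2 (pd1 f) p⟫ :=
    inner_fderiv_eq_neg_of_inner_eqOn_const hΩ hp dν (h.differentiableAt_pd1 hΩ hp) h.nu_f1 _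
  have hνf₂ : ⟪pd2 ν p, pd2 f p⟫ = -⟪ν p, pd2 (pd2 f) p⟫ :=
    inner_fderiv_eq_neg_of_inner_eqOn_const hΩ hp dν (h.differentiableAt_pd2 hΩ hp) h.nu_f2 _
  have hνν : ⟪pd2 ν p, ν p⟫ = -⟪ν p, pd2 ν p⟫ :=
    inner_fderiv_eq_neg_of_inner_eqOn_const hΩ hp dν dν h.nu_unit _
  apply h.ext_frame hp <;> simp only [inner_neg_right, real_inner_smul_right]
  · rw [real_inner_comm, hνf₁, ← pd1_pd2_comm h.smooth_f (by norm_cast) hΩ hp, h.h12 p hp,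
      h.g12 p hp]
    ring
  · rw [real_inner_comm, hνf₂, h.h22 p hp, h.g22 p hp]; ring
  · rw [h.nu_f2 p hp]; linarith [real_inner_comm (ν p) (pd2 ν p)]

theorem fderiv_pd1_normal (h : IsCCC Ω f ν ρ κ₁ κ₂) (hΩ : IsOpen Ω) (hp : p ∈ Ω) (d : ℝ × ℝ) :
    fderiv ℝ (pd1 ν) p d = -(fderiv ℝ κ₁ p d • pd1 f p + κ₁ p • fderiv ℝ (pd1 f) p d) :=
  fderiv_apply_of_eqOn_neg_smul hΩ hp (h.smooth_κ₁.differentiableAt_of_isOpen (by simp) hΩ hp)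
    (h.differentiableAt_pd1 hΩ hp) (fun _ hq => h.pd1_normal hΩ hq) d

theorem fderiv_pd2_normal (h : IsCCC Ω f ν ρ κ₁ κ₂) (hΩ : IsOpen Ω) (hp : p ∈ Ω) (d : ℝ × ℝ) :
    fderiv ℝ (pd2 ν) p d = -(fderiv ℝ κ₂ p d • pd2 f p + κ₂ p • fderiv ℝ (pd2 f) p d) :=
  fderiv_apply_of_eqOn_neg_smul hΩ hp (h.smooth_κ₂.differentiableAt_of_isOpen (by simp) hΩ hp)
    (h.differentiableAt_pd2 hΩ hp) (fun _ hq => h.pd2_normal hΩ hq) d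

theorem codazzi (h : IsCCC Ω f ν ρ κ₁ κ₂) (hΩ : IsOpen Ω) (hp : p ∈ Ω) :
    pd1 κ₂ p • pd2 f p + κ₂ p • pd1 (pd2 f) p = pd2 κ₁ p • pd1 f p + κ₁ p • pd1 (pd2 f) p := by
  have h₁₂ : pd1 (pd2 ν) p = -(pd1 κ₂ p • pd2 f p + κ₂ p • pd1 (pd2 f) p) :=
    h.fderiv_pd2_normal hΩ hp _
  have h₂₁ : pd2 (pd1 ν) p = -(pd2 κ₁ p • pd1 f p + κ₁ p • pd2 (pd1 f) p) :=
    h.fderiv_pd1_normal hΩ hp _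
  have hsymm := pd1_pd2_comm h.smooth_ν (by norm_cast) hΩ hp
  rw [h₁₂, h₂₁, ← pd1_pd2_comm h.smooth_f (by norm_cast) hΩ hp] at hsymm
  exact neg_inj.1 hsymm

theorem codazzi₁ (h : IsCCC Ω f ν ρ κ₁ κ₂) (hΩ : IsOpen Ω) (hp : p ∈ Ω) :
    pd1 κ₂ p * ρ p ^ 2 = (κ₁ p - κ₂ p) * (ρ p * pd1 ρ p) := by
  have hΓ : ⟪pd2 f p, pd1 (pd2 f) p⟫ = ρ p * pd1 ρ p := h.inner_pd2_fderiv_pd2 hΩ hp _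
  have := congrArg (fun w => ⟪pd2 f p, w⟫) (h.codazzi hΩ hp)
  simp only [inner_add_right, real_inner_smul_right, h.g22 p hp, hΓ, real_inner_comm (pd1 f p),
    h.g12 p hp] at this
  linear_combination this

theorem codazzi₂ (h : IsCCC Ω f ν ρ κ₁ κ₂) (hΩ : IsOpen Ω) (hp : p ∈ Ω) :
    pd2 κ₁ p * ρ p ^ 2 = (κ₂ p - κ₁ p) * (ρ p * pd2 ρ p) := by
  have hΓ : ⟪pd1 f p, pd2 (pd1 f) p⟫ = ρ p * pd2 ρ p := h.inner_pd1_fderiv_pd1 hΩ hp _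
  have := congrArg (fun w => ⟪pd1 f p, w⟫) (h.codazzi hΩ hp)
  simp only [inner_add_right, real_inner_smul_right, h.g11 p hp,
    pd1_pd2_comm h.smooth_f (by norm_cast) hΩ hp, hΓ, h.g12 p hp] at this
  linear_combination -this

theorem laplacian_normal (h : IsCCC Ω f ν ρ κ₁ κ₂) (hΩ : IsOpen Ω) (hp : p ∈ Ω) :
    pd1 (pd1 ν) p + pd2 (pd2 ν) p = (-(ρ p ^ 2 * (κ₁ p ^ 2 + κ₂ p ^ 2))) • ν p
      - ((pd1 κ₁ p + pd1 κ₂ p) • pd1 f p + (pd2 κ₁ p + pd2 κ₂ p) • pd2 f p) := by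
  have h₁₁ : pd1 (pd1 ν) p = -(pd1 κ₁ p • pd1 f p + κ₁ p • pd1 (pd1 f) p) :=
    h.fderiv_pd1_normal hΩ hp _
  have h₂₂ : pd2 (pd2 ν) p = -(pd2 κ₂ p • pd2 f p + κ₂ p • pd2 (pd2 f) p) :=
    h.fderiv_pd2_normal hΩ hp _
  have Γ₁₁₁ : ⟪pd1 f p, pd1 (pd1 f) p⟫ = ρ p * pd1 ρ p := h.inner_pd1_fderiv_pd1 hΩ hp _
  have Γ₂₂₂ : ⟪pd2 f p, pd2 (pd2 f) p⟫ = ρ p * pd2 ρ p := h.inner_pd2_fderiv_pd2 hΩ hp _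
  rw [h₁₁, h₂₂]
  apply h.ext_frame hp <;>
    simp only [inner_add_right, inner_neg_right, inner_sub_right, real_inner_smul_right]
  · rw [h.g11 p hp, Γ₁₁₁, h.inner_pd1_pd2_pd2 hΩ hp, h.g12 p hp,
      real_inner_comm (ν p) (pd1 f p), h.nu_f1 p hp]
    linear_combination h.codazzi₁ hΩ hp
  · rw [h.g22 p hp, Γ₂₂₂, h.inner_pd2_pd1_pd1 hΩ hp, real_inner_comm (pd1 f p) (pd2 f p),
      h.g12 p hp, real_inner_comm (ν p) (pd2 f p), h.nu_f2 p hp]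
    linear_combination h.codazzi₂ hΩ hp
  · rw [h.h11 p hp, h.h22 p hp, h.nu_f1 p hp, h.nu_f2 p hp, h.nu_unit p hp]
    ring

end IsCCC

theorem normal_satisfies_jacobi_general (Ω : Set (ℝ × ℝ)) (hΩ : IsOpen Ω)
    (f ν : ℝ × ℝ → EuclideanSpace ℝ (Fin 3)) (ρ κ₁ κ₂ : ℝ × ℝ → ℝ)
    (hccc : IsCCC Ω f ν ρ κ₁ κ₂)
    (hH : ∃ c : ℝ, ∀ p ∈ Ω, κ₁ p + κ₂ p = c) :
    ∀ p ∈ Ω,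
      pd1 ν p = -(κ₁ p • pd1 f p) ∧
      pd2 ν p = -(κ₂ p • pd2 f p) ∧
      pd1 (pd1 ν) p + pd2 (pd2 ν) p = (-(ρ p ^ 2 * (κ₁ p ^ 2 + κ₂ p ^ 2))) • ν p := by
  obtain ⟨c, hc⟩ := hH
  intro p hp
  have hgradH : ∀ d, fderiv ℝ κ₁ p d + fderiv ℝ κ₂ p d = 0 := fun d => by
    rw [← add_apply, ← fderiv_fun_add (hccc.smooth_κ₁.differentiableAt_of_isOpen (by simp) hΩ hp)
      (hccc.smooth_κ₂.differentiableAt_of_isOpen (by simp) hΩ hp),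
      fderiv_eq_zero_of_eqOn_const hΩ hp hc, zero_apply]
  have hH₁ : pd1 κ₁ p + pd1 κ₂ p = 0 := hgradH _
  have hH₂ : pd2 κ₁ p + pd2 κ₂ p = 0 := hgradH _
  refine ⟨hccc.pd1_normal hΩ hp, hccc.pd2_normal hΩ hp, ?_⟩
  rw [hccc.laplacian_normal hΩ hp, hH₁, hH₂]
  simp

/-- For a CMC immersion in conformal curvature coordinates on an open
connected domain, the Weingarten relations hold and the unit normal satisfies the
Jacobi equation `Δ₀ν = −ρ²(κ₁² + κ₂²)ν`. -/
theorem normal_satisfies_jacobi (Ω : Set (ℝ × ℝ)) (hΩ : IsOpen Ω) (hconn : IsConnected Ω)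
    (f ν : ℝ × ℝ → EuclideanSpace ℝ (Fin 3)) (ρ κ₁ κ₂ : ℝ × ℝ → ℝ)
    (hccc : IsCCC Ω f ν ρ κ₁ κ₂)
    (hH : ∃ c : ℝ, ∀ p ∈ Ω, κ₁ p + κ₂ p = c) :
    ∀ p ∈ Ω,
      pd1 ν p = -(κ₁ p • pd1 f p) ∧
      pd2 ν p = -(κ₂ p • pd2 f p) ∧
      pd1 (pd1 ν) p + pd2 (pd2 ν) p = (-(ρ p ^ 2 * (κ₁ p ^ 2 + κ₂ p ^ 2))) • ν p :=
  normal_satisfies_jacobi_general Ω hΩ f ν ρ κ₁ κ₂ hccc hH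
end

section
/- Let Ω ⊆ ℝ² be open and let f : Ω → ℝ³ be twice continuously differentiable. Suppose that for every point p ∈ Ω and every vector v ∈ ℝ³ there exist an open neighborhood U ⊆ Ω of p and a twice continuously differentiable map ε : U → ℝ³ with ε(p) = v satisfying ∂₁ε = 2ε × ∂₂f and ∂₂ε = −2ε × ∂₁f on U. Then f satisfies ∂₁∂₁f + ∂₂∂₂f = 2·(∂₁f × ∂₂f) on Ω. -/
open scoped RealInnerProductSpace ContDiff

/-- The standard cross product on `ℝ³`. -/
def cross3 (a b : EuclideanSpace ℝ (Fin 3)) : EuclideanSpace ℝ (Fin 3) := WithLp.toLp 2 (crossProduct a b)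

/-!
For a solution `ε`, the symmetry `∂₂∂₁ε = ∂₁∂₂ε` of second derivatives, expanded with the
system and the Jacobi identity, reads `ε × (∂₁∂₁f + ∂₂∂₂f - 2 ∂₁f × ∂₂f) = 0`.
Since `ε(p)` can be prescribed arbitrarily, the vector in parentheses has zero cross product
with every vector, hence vanishes.
-/

open Filter Topology

local notation "ℝ³" => EuclideanSpace ℝ (Fin 3)

noncomputable def cross3L : ℝ³ →L[ℝ] ℝ³ →L[ℝ] ℝ³ :=
  LinearMap.toContinuousBilinearMap <|
    (crossProduct.compl₁₂ (WithLp.linearEquiv 2 ℝ (Fin 3 → ℝ)).toLinearMap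
      (WithLp.linearEquiv 2 ℝ (Fin 3 → ℝ)).toLinearMap).compr₂
      (WithLp.linearEquiv 2 ℝ (Fin 3 → ℝ)).symm.toLinearMap

@[simp] lemma cross3L_apply (a b : ℝ³) : cross3L a b = cross3 a b := rfl

lemma cross3_cross3_sub_cross3_cross3 (v a b : ℝ³) :
    cross3 (cross3 v a) b - cross3 (cross3 v b) a = cross3 v (cross3 a b) := by
  simp only [cross3, WithLp.ofLp_toLp, ← WithLp.toLp_sub]
  rw [← cross_anticomm (WithLp.ofLp a) (crossProduct (WithLp.ofLp v) (WithLp.ofLp b)),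
    cross_cross, sub_neg_eq_add, sub_add_cancel]

/-- The hypothesis is `∂₂∂₁ε = ∂₁∂₂ε` for a solution of the system, with `v = ε`, `a = ∂₁f`,
`b = ∂₂f`, `A = ∂₁∂₁f`, `B = ∂₂∂₂f`. -/
lemma cross3_add_sub_eq_zero_of_compat (v a b A B : ℝ³)
    (h : (2:ℝ) • (cross3 v B + cross3 ((-2:ℝ) • cross3 v a) b)
      = (-2:ℝ) • (cross3 v A + cross3 ((2:ℝ) • cross3 v b) a)) :
    cross3 v (A + B - (2:ℝ) • cross3 a b) = 0 := by
  have jacobi := cross3_cross3_sub_cross3_cross3 v a b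
  simp only [← cross3L_apply, map_add, map_sub, map_smul, smul_apply] at h jacobi ⊢
  linear_combination (norm := module) (1/2 : ℝ) • h + (2:ℝ) • jacobi

lemma eq_zero_of_forall_cross3_eq_zero {w : ℝ³} (h : ∀ v, cross3 v w = 0) : w = 0 := by
  have h0 := h (EuclideanSpace.single 0 1)
  have h1 := h (EuclideanSpace.single 1 1)
  ext i
  fin_cases i <;> simp_all [cross3, cross_apply, ← WithLp.toLp_zero]

section PartialDerivatives

variable {E : Type*} [NormedAddCommGroup E] [NormedSpace ℝ E]

lemma fderiv_smul_cross3_apply (c : ℝ) {a b : E → ℝ³} {p : E} (ha : DifferentiableAt ℝ a p)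
    (hb : DifferentiableAt ℝ b p) (w : E) :
    fderiv ℝ (fun q => c • cross3 (a q) (b q)) p w
      = c • (cross3 (a p) (fderiv ℝ b p w) + cross3 (fderiv ℝ a p w) (b p)) := by
  change fderiv ℝ (fun q => c • cross3L (a q) (b q)) p w = _
  rw [((cross3L.hasFDerivAt_of_bilinear ha.hasFDerivAt hb.hasFDerivAt).fun_const_smul c).fderiv]
  rfl

variable {F : Type*} [NormedAddCommGroup F] [NormedSpace ℝ F] {φ : E → F} {p : E}

lemma ContDiffAt.differentiableAt_fderiv (h : ContDiffAt ℝ 2 φ p) :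
    DifferentiableAt ℝ (fderiv ℝ φ) p :=
  (h.fderiv_right (m := 1) one_add_one_eq_two.le).differentiableAt one_ne_zero

lemma ContDiffAt.differentiableAt_fderiv_apply (h : ContDiffAt ℝ 2 φ p) (v : E) :
    DifferentiableAt ℝ (fun q => fderiv ℝ φ q v) p :=
  h.differentiableAt_fderiv.clm_apply (differentiableAt_const v)

lemma ContDiffAt.fderiv_fderiv_apply (h : ContDiffAt ℝ 2 φ p) (v w : E) :
    fderiv ℝ (fun q => fderiv ℝ φ q v) p w = fderiv ℝ (fderiv ℝ φ) p w v := by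
  simp [fderiv_clm_apply h.differentiableAt_fderiv (differentiableAt_const v)]

end PartialDerivatives

lemma pd2_pd1_eq_pd1_pd2 {F : Type*} [NormedAddCommGroup F] [NormedSpace ℝ F] {φ : ℝ × ℝ → F}
    {p : ℝ × ℝ} (h : ContDiffAt ℝ 2 φ p) : pd2 (pd1 φ) p = pd1 (pd2 φ) p := by
  unfold pd1 pd2
  rw [h.fderiv_fderiv_apply, h.fderiv_fderiv_apply, h.isSymmSndFDerivAt (by simp)]

lemma cross3_laplacian_sub_eq_zero {f ε : ℝ × ℝ → ℝ³} {p : ℝ × ℝ}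
    (hf : ContDiffAt ℝ 2 f p) (hε : ContDiffAt ℝ 2 ε p)
    (h1 : pd1 ε =ᶠ[𝓝 p] fun q => (2:ℝ) • cross3 (ε q) (pd2 f q))
    (h2 : pd2 ε =ᶠ[𝓝 p] fun q => -((2:ℝ) • cross3 (ε q) (pd1 f q))) :
    cross3 (ε p) (pd1 (pd1 f) p + pd2 (pd2 f) p - (2:ℝ) • cross3 (pd1 f p) (pd2 f p)) = 0 := by
  simp_rw [← neg_smul] at h2
  have hε' := hε.differentiableAt two_ne_zero
  have d21 : pd2 (pd1 ε) p
      = (2:ℝ) • (cross3 (ε p) (pd2 (pd2 f) p) + cross3 (pd2 ε p) (pd2 f p)) := by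
    rw [pd2, h1.fderiv_eq,
      fderiv_smul_cross3_apply _ (b := pd2 f) hε' (hf.differentiableAt_fderiv_apply _)]
    rfl
  have d12 : pd1 (pd2 ε) p
      = (-2:ℝ) • (cross3 (ε p) (pd1 (pd1 f) p) + cross3 (pd1 ε p) (pd1 f p)) := by
    rw [pd1, h2.fderiv_eq,
      fderiv_smul_cross3_apply _ (b := pd1 f) hε' (hf.differentiableAt_fderiv_apply _)]
    rfl
  have compat := pd2_pd1_eq_pd1_pd2 hε
  rw [d21, d12, h1.eq_of_nhds, h2.eq_of_nhds] at compat
  exact cross3_add_sub_eq_zero_of_compat _ _ _ _ _ compat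

/-- If the homogeneous spinning sphere system is locally solvable with
arbitrary initial data, then `f` satisfies the CMC-one equation `Δ₀f = 2·∂₁f × ∂₂f`. -/
theorem flat_connection_implies_cmc (Ω : Set (ℝ × ℝ)) (hΩ : IsOpen Ω)
    (f : ℝ × ℝ → EuclideanSpace ℝ (Fin 3)) (hf : ContDiffOn ℝ 2 f Ω)
    (hsolve : ∀ p ∈ Ω, ∀ v : EuclideanSpace ℝ (Fin 3),
      ∃ U : Set (ℝ × ℝ), U ⊆ Ω ∧ IsOpen U ∧ p ∈ U ∧
        ∃ ε : ℝ × ℝ → EuclideanSpace ℝ (Fin 3),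
          ContDiffOn ℝ 2 ε U ∧ ε p = v ∧
          (∀ q ∈ U, pd1 ε q = (2 : ℝ) • cross3 (ε q) (pd2 f q)) ∧
          (∀ q ∈ U, pd2 ε q = -((2 : ℝ) • cross3 (ε q) (pd1 f q)))) :
    ∀ p ∈ Ω,
      pd1 (pd1 f) p + pd2 (pd2 f) p = (2 : ℝ) • cross3 (pd1 f p) (pd2 f p) := by
  intro p hp
  refine sub_eq_zero.mp (eq_zero_of_forall_cross3_eq_zero fun v => ?_)
  obtain ⟨U, -, hU, hpU, ε, hε, rfl, h1, h2⟩ := hsolve p hp v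
  have hUp : U ∈ 𝓝 p := hU.mem_nhds hpU
  exact cross3_laplacian_sub_eq_zero (hf.contDiffAt (hΩ.mem_nhds hp)) (hε.contDiffAt hUp)
    (eventuallyEq_of_mem hUp h1) (eventuallyEq_of_mem hUp h2)
end
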